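/- Let n ≥ 3, m ≥ 1 with n ≥ 2m+3, and let h_{−m},…,h_m be real numbers with h_j = h_{−j} for all j (symmetric PSF). For u ∈ ℝⁿ define the anti-reflective extension ũ by ũ_j = u_j for 1 ≤ j ≤ n, ũ_{1−j} = 2u₁ − u_{j+1} and ũ_{n+j} = 2uₙ − u_{n−j} for 1 ≤ j ≤ m, and let A be the n×n matrix of the linear map (Au)_i = Σ_{j=−m}^{m} h_j ũ_{i−j}, 1 ≤ i ≤ n. Then A = T_n Λ T_n^{−1}, where Λ is the diagonal matrix with Λ_{11} = Λ_{nn} = ĥ(0) and Λ_{jj} = ĥ((j−1)π/(n−1)) for 2 ≤ j ≤ n−1, and ĥ(y) := Σ_{j=−m}^{m} h_j e^{ijy} = h₀ + 2·Σ_{j=1}^{m} h_j cos(jy) is the symbol generated by the PSF. -/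

import Mathlib

open Matrix

/-- The sine transform matrix of type I: `(S_m)_{ij} = sqrt(2/(m+1))·sin(ijπ/(m+1))`
for `1 ≤ i,j ≤ m` (indexed here by `Fin m`, i.e. with indices shifted by one). -/
noncomputable def sineMat (m : ℕ) : Matrix (Fin m) (Fin m) ℝ :=
  Matrix.of fun i j =>
    Real.sqrt (2 / (m + 1)) *
      Real.sin ((((i : ℕ) : ℝ) + 1) * (((j : ℕ) : ℝ) + 1) * Real.pi / (m + 1))

/-- The vector `p ∈ ℝ^{n-2}` with `p_j = 1 - j/(n-1)` for `j = 1,…,n-2` (1-based). -/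
noncomputable def pvec (n : ℕ) : Fin (n - 2) → ℝ := fun j => 1 - (((j : ℕ) : ℝ) + 1) / ((n : ℝ) - 1)

/-- The `m×m` flip (anti-identity) matrix. -/
def flipMat (m : ℕ) : Matrix (Fin m) (Fin m) ℝ :=
  Matrix.of fun i j => if (i : ℕ) + (j : ℕ) = m - 1 then 1 else 0

/-- The `n×n` matrix with block form `[[1,0,0],[x, M, y],[0,0,1]]`: first column `(1,x,0)ᵀ`,
last column `(0,y,1)ᵀ`, central `(n-2)×(n-2)` block `M`, zeros elsewhere in the first
and last rows. -/
noncomputable def blockT (n : ℕ) (x y : Fin (n - 2) → ℝ)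
    (M : Matrix (Fin (n - 2)) (Fin (n - 2)) ℝ) : Matrix (Fin n) (Fin n) ℝ :=
  Matrix.of fun i j =>
    if (i : ℕ) = 0 then (if (j : ℕ) = 0 then 1 else 0)
    else if (i : ℕ) = n - 1 then (if (j : ℕ) = n - 1 then 1 else 0)
    else if h : 0 < (i : ℕ) ∧ (i : ℕ) < n - 1 then
      if (j : ℕ) = 0 then x ⟨(i : ℕ) - 1, by omega⟩
      else if (j : ℕ) = n - 1 then y ⟨(i : ℕ) - 1, by omega⟩
      else if h2 : 0 < (j : ℕ) ∧ (j : ℕ) < n - 1 then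
        M ⟨(i : ℕ) - 1, by omega⟩ ⟨(j : ℕ) - 1, by omega⟩
      else 0
    else 0

/-- The anti-reflective transform `T_n = [[1,0,0],[p, S_{n-2}, Jp],[0,0,1]]`. -/
noncomputable def Tmat (n : ℕ) : Matrix (Fin n) (Fin n) ℝ :=
  blockT n (pvec n) ((flipMat (n - 2)).mulVec (pvec n)) (sineMat (n - 2))

/-- The anti-reflective extension of a (0-based) vector `u ∈ ℝⁿ` to all of `ℤ`:
`ũ_t = u_t` for `0 ≤ t ≤ n-1`, `ũ_{-j} = 2u_0 - u_j`, `ũ_{n-1+j} = 2u_{n-1} - u_{n-1-j}`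
(this is the 1-based rule `ũ_{1-j} = 2u_1 - u_{j+1}`, `ũ_{n+j} = 2u_n - u_{n-j}`);
the value is `0` outside the range covered by these rules. -/
noncomputable def arExt (n : ℕ) (u : Fin n → ℝ) : ℤ → ℝ := fun t =>
  if h : 0 ≤ t ∧ t < (n : ℤ) then u ⟨t.toNat, by omega⟩
  else if h2 : t < 0 ∧ -t < (n : ℤ) then
    2 * u ⟨0, by omega⟩ - u ⟨(-t).toNat, by omega⟩
  else if h3 : (n : ℤ) ≤ t ∧ 0 ≤ 2 * (n : ℤ) - 2 - t ∧ 2 * (n : ℤ) - 2 - t < (n : ℤ) then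
    2 * u ⟨n - 1, by omega⟩ - u ⟨(2 * (n : ℤ) - 2 - t).toNat, by omega⟩
  else 0

/-- The symbol generated by a symmetric PSF `h`:
`ĥ(y) = Σ_{j=-m}^m h_j e^{ijy} = h₀ + 2·Σ_{j=1}^m h_j cos(jy)`. -/
noncomputable def symb (m : ℕ) (hc : ℤ → ℝ) (y : ℝ) : ℝ :=
  hc 0 + 2 * ∑ j ∈ Finset.Icc (1 : ℤ) (m : ℤ), hc j * Real.cos ((j : ℝ) * y)

section AuxLemmas
open Real Finset

lemma cos_full_sum (m : ℕ) (r : ℤ) :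
    ∑ k ∈ Finset.range (2 * m + 2), Real.cos ((k : ℝ) * ((r : ℝ) * Real.pi / (m + 1)))
      = if ((2 * m + 2 : ℤ)) ∣ r then (2 * m + 2 : ℝ) else 0 := by
  have hm1 : ((m : ℝ) + 1) ≠ 0 := by positivity
  have hm1' : ((m : ℂ) + 1) ≠ 0 := by
    intro h
    apply hm1
    exact_mod_cast congrArg Complex.re h
  set θ : ℝ := (r : ℝ) * Real.pi / (m + 1) with hθ
  set z : ℂ := Complex.exp (θ * Complex.I) with hz
  have hre : ∀ k : ℕ, Real.cos ((k : ℝ) * θ) = (z ^ k).re := by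
    intro k
    rw [hz, ← Complex.exp_nat_mul]
    rw [show (k : ℂ) * (↑θ * Complex.I) = ((k : ℝ) * θ : ℝ) * Complex.I by push_cast; ring]
    rw [Complex.exp_ofReal_mul_I_re]
  have hsum : ∑ k ∈ Finset.range (2 * m + 2), Real.cos ((k : ℝ) * θ)
      = (∑ k ∈ Finset.range (2 * m + 2), z ^ k).re := by
    rw [Complex.re_sum]
    exact Finset.sum_congr rfl fun k _ => hre k
  rw [hsum]
  by_cases hdvd : ((2 * m + 2 : ℤ)) ∣ r
  · rw [if_pos hdvd]
    obtain ⟨s, hs⟩ := hdvd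
    have hθval : θ = (s : ℝ) * (2 * Real.pi) := by
      rw [hθ, hs]
      push_cast
      field_simp
    have hz1 : z = 1 := by
      rw [hz, Complex.exp_eq_one_iff]
      exact ⟨s, by rw [hθval]; push_cast; ring⟩
    simp [hz1]
  · rw [if_neg hdvd]
    have hz1 : z ≠ 1 := by
      rw [hz, Ne, Complex.exp_eq_one_iff]
      rintro ⟨s, hs⟩
      apply hdvd
      refine ⟨s, ?_⟩
      have h2' : (θ : ℂ) * Complex.I = (↑s * (2 * (Real.pi : ℂ))) * Complex.I := by
        rw [hs]; ring
      have h3 : (θ : ℂ) = (s : ℂ) * (2 * (Real.pi : ℂ)) :=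
        mul_right_cancel₀ Complex.I_ne_zero h2'
      have h4 : θ = (s : ℝ) * (2 * Real.pi) := by exact_mod_cast h3
      rw [hθ] at h4
      field_simp at h4
      have h5 : (r : ℝ) * Real.pi = (((2 * m + 2 : ℤ) * s : ℤ) : ℝ) * Real.pi := by
        rw [h4]; push_cast; ring
      have h6 : (r : ℝ) = (((2 * m + 2 : ℤ) * s : ℤ) : ℝ) :=
        mul_right_cancel₀ Real.pi_ne_zero h5
      exact_mod_cast h6
    have hzpow : z ^ (2 * m + 2) = 1 := by
      rw [hz, ← Complex.exp_nat_mul, Complex.exp_eq_one_iff]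
      refine ⟨r, ?_⟩
      have : ((2 * m + 2 : ℕ) : ℂ) * θ = (r : ℂ) * (2 * (Real.pi : ℂ)) := by
        rw [hθ]
        push_cast
        field_simp
      rw [show ((2 * m + 2 : ℕ) : ℂ) * (↑θ * Complex.I) = (((2 * m + 2 : ℕ) : ℂ) * θ) * Complex.I by ring, this]
      ring
    rw [geom_sum_eq hz1, hzpow]
    simp

lemma sine_orth (m : ℕ) (a b : ℕ) (ha : a < m) (hb : b < m) :
    ∑ k ∈ Finset.range m,
      Real.sin (((a : ℝ) + 1) * ((k : ℝ) + 1) * Real.pi / (m + 1)) *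
        Real.sin (((b : ℝ) + 1) * ((k : ℝ) + 1) * Real.pi / (m + 1))
      = if a = b then ((m : ℝ) + 1) / 2 else 0 := by
  have hm1 : ((m : ℝ) + 1) ≠ 0 := by positivity
  set g : ℕ → ℝ := fun k =>
    Real.sin (((a : ℝ) + 1) * (k : ℝ) * Real.pi / (m + 1)) *
      Real.sin (((b : ℝ) + 1) * (k : ℝ) * Real.pi / (m + 1)) with hg
  -- full-period sum
  have prodsum : ∀ x y : ℝ, Real.sin x * Real.sin y = (Real.cos (x - y) - Real.cos (x + y)) / 2 := by
    intro x y; rw [Real.cos_sub, Real.cos_add]; ring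
  have hfull : ∑ k ∈ Finset.range (2 * m + 2), g k
      = (if a = b then (2 * (m : ℝ) + 2) else 0) / 2 := by
    have heach : ∀ k : ℕ, g k =
        (Real.cos ((k : ℝ) * ((((a : ℤ) - b : ℤ) : ℝ) * Real.pi / (m + 1)))
          - Real.cos ((k : ℝ) * ((((a + b + 2 : ℤ)) : ℝ) * Real.pi / (m + 1)))) / 2 := by
      intro k
      rw [hg]
      simp only
      rw [prodsum]
      push_cast
      ring_nf
    rw [Finset.sum_congr rfl fun k _ => heach k]
    rw [← Finset.sum_div, Finset.sum_sub_distrib]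
    rw [cos_full_sum m ((a : ℤ) - b), cos_full_sum m ((a + b + 2 : ℤ))]
    have h1 : ((2 * m + 2 : ℤ)) ∣ ((a : ℤ) - b) ↔ a = b := by
      constructor
      · intro hd
        rcases lt_trichotomy ((a:ℤ) - b) 0 with h | h | h
        · have := Int.le_of_dvd (by omega) hd.neg_right
          omega
        · omega
        · have := Int.le_of_dvd h hd
          omega
      · intro h; simp [h]
    have h2 : ¬ ((2 * m + 2 : ℤ)) ∣ ((a : ℤ) + b + 2) := by
      intro hd
      have := Int.le_of_dvd (by omega) hd
      omega
    rw [if_neg h2]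
    by_cases hab : a = b
    · rw [if_pos (h1.mpr hab), if_pos hab]; push_cast; ring
    · rw [if_neg (fun hd => hab (h1.mp hd)), if_neg hab]; ring
  -- symmetry folding
  have hg0 : g 0 = 0 := by simp [hg]
  have hgm : g (m + 1) = 0 := by
    rw [hg]
    simp only
    have : ((a : ℝ) + 1) * ((m + 1 : ℕ) : ℝ) * Real.pi / (m + 1) = ((a + 1 : ℕ) : ℝ) * Real.pi := by
      push_cast; field_simp
    rw [this, Real.sin_nat_mul_pi]
    ring
  have hsymm : ∀ k : ℕ, k ≤ m + 1 → g (m + 1 + k) = g (m + 1 - k) := by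
    intro k hk
    rw [hg]
    simp only
    have e1 : ∀ c : ℕ, ((c : ℝ) + 1) * ((m + 1 + k : ℕ) : ℝ) * Real.pi / (m + 1)
        = ((c + 1 : ℕ) : ℝ) * Real.pi + ((c : ℝ) + 1) * (k : ℝ) * Real.pi / (m + 1) := by
      intro c; push_cast; field_simp
    have e2 : ∀ c : ℕ, ((c : ℝ) + 1) * ((m + 1 - k : ℕ) : ℝ) * Real.pi / (m + 1)
        = ((c + 1 : ℕ) : ℝ) * Real.pi - ((c : ℝ) + 1) * (k : ℝ) * Real.pi / (m + 1) := by
      intro c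
      have : ((m + 1 - k : ℕ) : ℝ) = (m : ℝ) + 1 - k := by
        have : (k : ℝ) ≤ (m : ℝ) + 1 := by exact_mod_cast hk
        push_cast [Nat.cast_sub hk]
        ring
      rw [this]; field_simp; push_cast; ring
    rw [e1 a, e1 b, e2 a, e2 b]
    rw [Real.sin_add, Real.sin_add, Real.sin_sub, Real.sin_sub,
      Real.sin_nat_mul_pi, Real.sin_nat_mul_pi]
    ring
  have hhalf : ∑ k ∈ Finset.range (2 * m + 2), g k = 2 * ∑ k ∈ Finset.range m, g (k + 1) := by
    have hsplit : ∑ k ∈ Finset.range (2 * m + 2), g k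
        = ∑ k ∈ Finset.range (m + 1), g k + ∑ k ∈ Finset.Ico (m + 1) (2 * m + 2), g k := by
      rw [Finset.range_eq_Ico,
        ← Finset.sum_Ico_consecutive g (Nat.zero_le (m + 1)) (show m + 1 ≤ 2 * m + 2 by omega),
        ← Finset.range_eq_Ico]
    have h2nd : ∑ k ∈ Finset.Ico (m + 1) (2 * m + 2), g k
        = ∑ k ∈ Finset.range (m + 1), g (m + 1 + k) := by
      rw [Finset.sum_Ico_eq_sum_range]
      have h22 : 2 * m + 2 - (m + 1) = m + 1 := by omega
      rw [h22]
    have h3 : ∑ k ∈ Finset.range (m + 1), g (m + 1 + k)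
        = ∑ k ∈ Finset.range (m + 1), g (m + 1 - k) :=
      Finset.sum_congr rfl fun k hk => hsymm k (by have := Finset.mem_range.mp hk; omega)
    have h4 : ∑ k ∈ Finset.range (m + 1), g (m + 1 - k)
        = ∑ k ∈ Finset.range (m + 1), g (k + 1) := by
      have := Finset.sum_range_reflect (fun j => g (j + 1)) (m + 1)
      rw [← this]
      refine Finset.sum_congr rfl fun k hk => ?_
      simp at hk
      congr 1
      omega
    have h5 : ∑ k ∈ Finset.range (m + 1), g (k + 1)
        = ∑ k ∈ Finset.range m, g (k + 1) := by
      rw [Finset.sum_range_succ, hgm, add_zero]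
    have h6 : ∑ k ∈ Finset.range (m + 1), g k
        = ∑ k ∈ Finset.range m, g (k + 1) := by
      rw [Finset.sum_range_succ'] ; rw [hg0, add_zero]
    rw [hsplit, h2nd, h3, h4, h5, h6]
    ring
  have hfin : ∑ k ∈ Finset.range m, g (k + 1) = (if a = b then ((m : ℝ) + 1) else 0) / 2 := by
    have := hhalf.symm.trans hfull
    by_cases hab : a = b <;> simp [hab] at this ⊢ <;> linarith
  have hrw : ∑ k ∈ Finset.range m,
      Real.sin (((a : ℝ) + 1) * ((k : ℝ) + 1) * Real.pi / (m + 1)) *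
        Real.sin (((b : ℝ) + 1) * ((k : ℝ) + 1) * Real.pi / (m + 1))
      = ∑ k ∈ Finset.range m, g (k + 1) := by
    refine Finset.sum_congr rfl fun k hk => ?_
    rw [hg]
    simp only
    push_cast
    ring_nf
  rw [hrw, hfin]
  split_ifs <;> norm_num

lemma sineMat_sq (m : ℕ) : sineMat m * sineMat m = 1 := by
  ext a b
  rw [Matrix.mul_apply]
  have hterm : ∀ k : Fin m, sineMat m a k * sineMat m k b
      = (2 / ((m : ℝ) + 1)) *
        (Real.sin ((((a : ℕ) : ℝ) + 1) * (((k : ℕ) : ℝ) + 1) * Real.pi / (m + 1)) *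
         Real.sin ((((b : ℕ) : ℝ) + 1) * (((k : ℕ) : ℝ) + 1) * Real.pi / (m + 1))) := by
    intro k
    simp only [sineMat, Matrix.of_apply]
    have hs : Real.sqrt (2 / ((m : ℝ) + 1)) * Real.sqrt (2 / ((m : ℝ) + 1)) = 2 / ((m : ℝ) + 1) :=
      Real.mul_self_sqrt (by positivity)
    calc _ = (Real.sqrt (2 / ((m : ℝ) + 1)) * Real.sqrt (2 / ((m : ℝ) + 1))) *
        (Real.sin ((((a : ℕ) : ℝ) + 1) * (((k : ℕ) : ℝ) + 1) * Real.pi / (m + 1)) *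
         Real.sin ((((b : ℕ) : ℝ) + 1) * (((k : ℕ) : ℝ) + 1) * Real.pi / (m + 1))) := by ring_nf
      _ = _ := by rw [hs]
  rw [Finset.sum_congr rfl fun k _ => hterm k, ← Finset.mul_sum]
  rw [Fin.sum_univ_eq_sum_range (fun k : ℕ =>
      Real.sin ((((a : ℕ) : ℝ) + 1) * ((k : ℝ) + 1) * Real.pi / (m + 1)) *
        Real.sin ((((b : ℕ) : ℝ) + 1) * ((k : ℝ) + 1) * Real.pi / (m + 1))) m]
  rw [sine_orth m a b a.isLt b.isLt]
  have hm1 : ((m : ℝ) + 1) ≠ 0 := by positivity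
  by_cases hab : a = b
  · rw [if_pos (congrArg Fin.val hab), hab, Matrix.one_apply_eq]
    field_simp
  · rw [if_neg (fun h => hab (Fin.ext h)), Matrix.one_apply_ne hab, mul_zero]

section blockT_lemmas
variable {n : ℕ} (hn : 3 ≤ n) (x y : Fin (n - 2) → ℝ)
    (M : Matrix (Fin (n - 2)) (Fin (n - 2)) ℝ)

lemma blockT_row0 (j : Fin n) :
    blockT n x y M ⟨0, by omega⟩ j = if (j : ℕ) = 0 then 1 else 0 := by
  simp only [blockT, Matrix.of_apply]
  split_ifs <;> first | rfl | omega | (exfalso; omega)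

lemma blockT_rowlast (j : Fin n) :
    blockT n x y M ⟨n - 1, by omega⟩ j = if (j : ℕ) = n - 1 then 1 else 0 := by
  simp only [blockT, Matrix.of_apply]
  split_ifs <;> first | rfl | omega | (exfalso; omega)

lemma blockT_rowmid (t : Fin (n - 2)) (j : Fin n) :
    blockT n x y M ⟨(t : ℕ) + 1, by have := t.isLt; omega⟩ j =
      if (j : ℕ) = 0 then x t
      else if (j : ℕ) = n - 1 then y t
      else if h2 : 0 < (j : ℕ) ∧ (j : ℕ) < n - 1 then M t ⟨(j : ℕ) - 1, by omega⟩
      else 0 := by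
  have ht := t.isLt
  simp only [blockT, Matrix.of_apply]
  rw [if_neg (by omega : ¬ ((t : ℕ) + 1 = 0)), if_neg (by omega : ¬ ((t : ℕ) + 1 = n - 1)),
    dif_pos (by omega : 0 < (t : ℕ) + 1 ∧ (t : ℕ) + 1 < n - 1)]
  have hts : (⟨(t : ℕ) + 1 - 1, by omega⟩ : Fin (n - 2)) = t := Fin.ext (by simp)
  split_ifs with h1 h2 h3
  · rfl
  · rfl
  · exact congrFun (congrArg M hts) _
  · rfl

lemma blockT_00 : blockT n x y M ⟨0, by omega⟩ ⟨0, by omega⟩ = 1 := by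
  rw [blockT_row0 hn]; simp

lemma blockT_0last : blockT n x y M ⟨0, by omega⟩ ⟨n - 1, by omega⟩ = 0 := by
  rw [blockT_row0 hn]; simp; omega

lemma blockT_0mid (t : Fin (n - 2)) :
    blockT n x y M ⟨0, by omega⟩ ⟨(t : ℕ) + 1, by have := t.isLt; omega⟩ = 0 := by
  rw [blockT_row0 hn]; simp

lemma blockT_last0 : blockT n x y M ⟨n - 1, by omega⟩ ⟨0, by omega⟩ = 0 := by
  rw [blockT_rowlast hn]; simp; omega

lemma blockT_lastlast : blockT n x y M ⟨n - 1, by omega⟩ ⟨n - 1, by omega⟩ = 1 := by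
  rw [blockT_rowlast hn]; simp

lemma blockT_lastmid (t : Fin (n - 2)) :
    blockT n x y M ⟨n - 1, by omega⟩ ⟨(t : ℕ) + 1, by have := t.isLt; omega⟩ = 0 := by
  rw [blockT_rowlast hn]; simp; have := t.isLt; omega

lemma blockT_mid0 (t : Fin (n - 2)) :
    blockT n x y M ⟨(t : ℕ) + 1, by have := t.isLt; omega⟩ ⟨0, by omega⟩ = x t := by
  rw [blockT_rowmid hn]; simp

lemma blockT_midlast (t : Fin (n - 2)) :
    blockT n x y M ⟨(t : ℕ) + 1, by have := t.isLt; omega⟩ ⟨n - 1, by omega⟩ = y t := by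
  rw [blockT_rowmid hn]; simp; omega

lemma blockT_midmid (s t : Fin (n - 2)) :
    blockT n x y M ⟨(s : ℕ) + 1, by have := s.isLt; omega⟩
      ⟨(t : ℕ) + 1, by have := t.isLt; omega⟩ = M s t := by
  have ht := t.isLt
  rw [blockT_rowmid hn]
  rw [if_neg (by simp), if_neg (by simp; omega), dif_pos (by simp; omega)]
  exact congrArg (M s) (Fin.ext (by simp))

end blockT_lemmas

lemma fin_cases3 {n : ℕ} (hn : 3 ≤ n) (i : Fin n) :
    i = ⟨0, by omega⟩ ∨ i = ⟨n - 1, by omega⟩ ∨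
      ∃ t : Fin (n - 2), i = ⟨(t : ℕ) + 1, by have := t.isLt; omega⟩ := by
  rcases Nat.eq_zero_or_pos (i : ℕ) with h | h
  · exact Or.inl (Fin.ext h)
  rcases Nat.lt_or_ge (i : ℕ) (n - 1) with h2 | h2
  · exact Or.inr (Or.inr ⟨⟨(i : ℕ) - 1, by omega⟩, Fin.ext (by simp; omega)⟩)
  · exact Or.inr (Or.inl (Fin.ext (by simp; have := i.isLt; omega)))

lemma fin_sum_split {n : ℕ} (hn : 3 ≤ n) (f : Fin n → ℝ) :
    ∑ k, f k = f ⟨0, by omega⟩ +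
      (∑ t : Fin (n - 2), f ⟨(t : ℕ) + 1, by have := t.isLt; omega⟩) + f ⟨n - 1, by omega⟩ := by
  classical
  set g : ℕ → ℝ := fun k => if h : k < n then f ⟨k, h⟩ else 0 with hg
  have h1 : ∑ k, f k = ∑ k ∈ Finset.range n, g k := by
    rw [← Fin.sum_univ_eq_sum_range]
    exact Finset.sum_congr rfl fun k _ => by simp [hg, k.isLt]
  have h2 : Finset.range n = Finset.range ((n - 2) + 1 + 1) := by
    congr 1
    omega
  rw [h1, h2, Finset.sum_range_succ, Finset.sum_range_succ']
  have e0 : g 0 = f ⟨0, by omega⟩ := by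
    simp only [hg]; rw [dif_pos (by omega)]
  have elast : g ((n - 2) + 1) = f ⟨n - 1, by omega⟩ := by
    simp only [hg]
    rw [dif_pos (by omega)]
    congr 1
    exact Fin.ext (by simp; omega)
  have emid : ∑ k ∈ Finset.range (n - 2), g (k + 1)
      = ∑ t : Fin (n - 2), f ⟨(t : ℕ) + 1, by have := t.isLt; omega⟩ := by
    rw [Fin.sum_univ_eq_sum_range (fun k : ℕ => g (k + 1)) (n - 2) |>.symm]
    refine Finset.sum_congr rfl fun t _ => ?_
    simp only [hg]
    rw [dif_pos (by have := t.isLt; omega)]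
  rw [e0, elast, emid]
  ring

lemma blockT_mul {n : ℕ} (hn : 3 ≤ n) (x y x' y' : Fin (n - 2) → ℝ)
    (M M' : Matrix (Fin (n - 2)) (Fin (n - 2)) ℝ) :
    blockT n x y M * blockT n x' y' M'
      = blockT n (fun i => x i + M.mulVec x' i) (fun i => y i + M.mulVec y' i) (M * M') := by
  ext i j
  rw [Matrix.mul_apply, fin_sum_split hn]
  have h10 : ¬ (n - 1 = 0) := by omega
  rcases fin_cases3 hn i with hi | hi | ⟨s, hi⟩
  · subst hi
    simp only [blockT_00 hn, blockT_0mid hn, blockT_0last hn,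
      blockT_row0 hn, blockT_rowlast hn]
    simp
  · subst hi
    simp only [blockT_last0 hn, blockT_lastmid hn, blockT_lastlast hn,
      blockT_row0 hn, blockT_rowlast hn]
    simp [h10]
  · subst hi
    simp only [blockT_midmid hn]
    simp only [blockT_mid0 hn, blockT_midlast hn]
    simp only [blockT_row0 hn, blockT_rowlast hn, blockT_rowmid hn]
    by_cases hj0 : (j : ℕ) = 0
    · have hjl : ¬ ((j : ℕ) = n - 1) := by omega
      simp [hj0, hjl, h10, show ¬ (0 = n - 1) by omega, Matrix.mulVec, dotProduct]
    · by_cases hjl : (j : ℕ) = n - 1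
      · simp [hj0, hjl, h10, show ¬ (n - 1 = 0) by omega, Matrix.mulVec, dotProduct]
        ring
      · have hj2 : 0 < (j : ℕ) ∧ (j : ℕ) < n - 1 := by have := j.isLt; omega
        simp only [if_neg hj0, if_neg hjl, dif_pos hj2]
        simp [Matrix.mul_apply]

lemma blockT_id {n : ℕ} (hn : 3 ≤ n) :
    blockT n (fun _ => 0) (fun _ => 0) 1 = 1 := by
  ext i j
  rcases fin_cases3 hn i with hi | hi | ⟨s, hi⟩ <;>
    rcases fin_cases3 hn j with hj | hj | ⟨t, hj⟩ <;> subst hi <;> subst hj <;>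
    simp [blockT_00 hn, blockT_0last hn, blockT_0mid hn, blockT_last0 hn,
      blockT_lastlast hn, blockT_lastmid hn, blockT_mid0 hn, blockT_midlast hn,
      blockT_midmid hn, Matrix.one_apply, Fin.ext_iff] <;>
    first
    | omega
    | (split_ifs <;> first | rfl | omega)
    | (intro h; omega)

lemma sum_sym (m : ℕ) (hc : ℤ → ℝ) (hsym : ∀ j : ℤ, hc (-j) = hc j) (θ : ℝ) (f : ℤ → ℝ)
    (Hcos : ∀ s j : ℤ, f (s - j) + f (s + j) = 2 * Real.cos ((j : ℝ) * θ) * f s) (i : ℤ) :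
    ∑ j ∈ Finset.Icc (-(m : ℤ)) (m : ℤ), hc j * f (i - j) = symb m hc θ * f i := by
  induction m with
  | zero =>
    simp [symb]
  | succ m ih =>
    have h1 : Finset.Icc (-((m + 1 : ℕ) : ℤ)) ((m + 1 : ℕ) : ℤ)
        = insert (-((m + 1 : ℕ) : ℤ)) (insert ((m + 1 : ℕ) : ℤ) (Finset.Icc (-(m : ℤ)) (m : ℤ))) := by
      ext z
      simp only [Finset.mem_Icc, Finset.mem_insert]
      push_cast
      omega
    have hnot1 : (-((m + 1 : ℕ) : ℤ)) ∉ insert ((m + 1 : ℕ) : ℤ) (Finset.Icc (-(m : ℤ)) (m : ℤ)) := by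
      simp only [Finset.mem_insert, Finset.mem_Icc]
      push_cast
      omega
    have hnot2 : ((m + 1 : ℕ) : ℤ) ∉ Finset.Icc (-(m : ℤ)) (m : ℤ) := by
      simp only [Finset.mem_Icc]
      push_cast
      omega
    rw [h1, Finset.sum_insert hnot1, Finset.sum_insert hnot2, ih]
    have h2 : symb (m + 1) hc θ = symb m hc θ
        + 2 * (hc ((m + 1 : ℕ) : ℤ) * Real.cos (((m + 1 : ℕ) : ℝ) * θ)) := by
      unfold symb
      have : ((m + 1 : ℕ) : ℤ) = (m : ℤ) + 1 := by push_cast; ring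
      have hi2 : Finset.Icc (1 : ℤ) ((m : ℤ) + 1) = insert ((m : ℤ) + 1) (Finset.Icc (1 : ℤ) (m : ℤ)) := by
        ext z
        simp only [Finset.mem_Icc, Finset.mem_insert]
        omega
      have hnot3 : ((m : ℤ) + 1) ∉ Finset.Icc (1 : ℤ) (m : ℤ) := by
        simp only [Finset.mem_Icc]
        omega
      rw [this, hi2, Finset.sum_insert hnot3]
      push_cast
      ring
    rw [h2]
    have h3 := Hcos i ((m + 1 : ℕ) : ℤ)
    have h4 := hsym ((m + 1 : ℕ) : ℤ)
    have h5 : i - -((m + 1 : ℕ) : ℤ) = i + ((m + 1 : ℕ) : ℤ) := by ring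
    rw [h5, h4]
    push_cast at h3 ⊢
    linear_combination hc ((m : ℤ) + 1) * h3

lemma arExt_eq (n m : ℕ) (hn : 3 ≤ n) (hnm : 2 * m + 3 ≤ n) (u : Fin n → ℝ) (f : ℤ → ℝ)
    (hu : ∀ r : Fin n, u r = f ((r : ℕ) : ℤ))
    (H0 : ∀ j : ℤ, 1 ≤ j → j ≤ (m : ℤ) → f (-j) = 2 * f 0 - f j)
    (H1 : ∀ j : ℤ, 1 ≤ j → j ≤ (m : ℤ) →
      f ((n : ℤ) - 1 + j) = 2 * f ((n : ℤ) - 1) - f ((n : ℤ) - 1 - j))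
    (t : ℤ) (ht1 : -(m : ℤ) ≤ t) (ht2 : t ≤ (n : ℤ) - 1 + m) :
    arExt n u t = f t := by
  unfold arExt
  split_ifs with h h2 h3
  · rw [hu]
    congr 1
    simp
    omega
  · rw [hu, hu]
    have e0 : (((⟨0, by omega⟩ : Fin n) : ℕ) : ℤ) = 0 := by simp
    have e1 : (((⟨(-t).toNat, by omega⟩ : Fin n) : ℕ) : ℤ) = -t := by simp; omega
    rw [e0, e1]
    have := H0 (-t) (by omega) (by omega)
    rw [neg_neg] at this
    linarith
  · rw [hu, hu]
    have e0 : (((⟨n - 1, by omega⟩ : Fin n) : ℕ) : ℤ) = (n : ℤ) - 1 := by simp; omega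
    have e1 : (((⟨(2 * (n : ℤ) - 2 - t).toNat, by omega⟩ : Fin n) : ℕ) : ℤ)
        = 2 * (n : ℤ) - 2 - t := by simp; omega
    rw [e0, e1]
    have := H1 (t - ((n : ℤ) - 1)) (by omega) (by omega)
    have e2 : (n : ℤ) - 1 + (t - ((n : ℤ) - 1)) = t := by ring
    have e3 : (n : ℤ) - 1 - (t - ((n : ℤ) - 1)) = 2 * (n : ℤ) - 2 - t := by ring
    rw [e2, e3] at this
    linarith
  · exfalso
    omega

lemma flip_mulVec {k : ℕ} (v : Fin k → ℝ) (t : Fin k) :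
    (flipMat k).mulVec v t = v ⟨k - 1 - (t : ℕ), by have := t.isLt; omega⟩ := by
  unfold Matrix.mulVec dotProduct flipMat
  simp only [Matrix.of_apply]
  rw [Finset.sum_eq_single (⟨k - 1 - (t : ℕ), by have := t.isLt; omega⟩ : Fin k)]
  · rw [if_pos (by simp; have := t.isLt; omega)]
    ring
  · intro b _ hb
    have hcond : ¬ ((t : ℕ) + (b : ℕ) = k - 1) := by
      intro h
      apply hb
      apply Fin.ext
      simp
      omega
    rw [if_neg hcond]
    ring
  · intro h
    exact absurd (Finset.mem_univ _) h

lemma col_sum (n m : ℕ) (hn : 3 ≤ n) (hnm : 2 * m + 3 ≤ n) (hc : ℤ → ℝ)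
    (hsym : ∀ j : ℤ, hc (-j) = hc j) (θ : ℝ) (f : ℤ → ℝ) (u : Fin n → ℝ)
    (hu : ∀ r : Fin n, u r = f ((r : ℕ) : ℤ))
    (Hcos : ∀ s j : ℤ, f (s - j) + f (s + j) = 2 * Real.cos ((j : ℝ) * θ) * f s)
    (H0 : ∀ j : ℤ, 1 ≤ j → j ≤ (m : ℤ) → f (-j) = 2 * f 0 - f j)
    (H1 : ∀ j : ℤ, 1 ≤ j → j ≤ (m : ℤ) →
      f ((n : ℤ) - 1 + j) = 2 * f ((n : ℤ) - 1) - f ((n : ℤ) - 1 - j))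
    (i : Fin n) :
    ∑ j ∈ Finset.Icc (-(m : ℤ)) (m : ℤ), hc j * arExt n u (((i : ℕ) : ℤ) - j)
      = symb m hc θ * u i := by
  have hstep : ∀ j ∈ Finset.Icc (-(m : ℤ)) (m : ℤ),
      hc j * arExt n u (((i : ℕ) : ℤ) - j) = hc j * f (((i : ℕ) : ℤ) - j) := by
    intro j hj
    rw [Finset.mem_Icc] at hj
    have hi := i.isLt
    rw [arExt_eq n m hn hnm u f hu H0 H1 _ (by omega) (by omega)]
  rw [Finset.sum_congr rfl hstep, sum_sym m hc hsym θ f Hcos, hu i]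

end AuxLemmas

/-- the one-dimensional anti-reflective blurring matrix `A` of a symmetric
PSF `h_{-m},…,h_m` (with `n ≥ 2m+3`) satisfies `A = T_n Λ T_n⁻¹`, where
`Λ₁₁ = Λₙₙ = ĥ(0)` and `Λ_jj = ĥ((j-1)π/(n-1))` for `2 ≤ j ≤ n-1` (1-based). -/
theorem antireflective_blur_diagonalization (n m : ℕ) (hn : 3 ≤ n) (hm : 1 ≤ m)
    (hnm : 2 * m + 3 ≤ n) (hc : ℤ → ℝ) (hsym : ∀ j : ℤ, hc (-j) = hc j)
    (A : Matrix (Fin n) (Fin n) ℝ)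
    (hA : ∀ u : Fin n → ℝ, ∀ i : Fin n,
      A.mulVec u i = ∑ j ∈ Finset.Icc (-(m : ℤ)) (m : ℤ), hc j * arExt n u ((i : ℤ) - j)) :
    A = Tmat n *
          Matrix.diagonal (fun j : Fin n =>
            if (j : ℕ) = 0 ∨ (j : ℕ) = n - 1 then symb m hc 0
            else symb m hc (((j : ℕ) : ℝ) * Real.pi / ((n : ℝ) - 1))) *
          (Tmat n)⁻¹ := by
  classical
  have h2n : 2 ≤ n := by omega
  have hcast : ((n - 2 : ℕ) : ℝ) + 1 = (n : ℝ) - 1 := by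
    rw [Nat.cast_sub h2n]; push_cast; ring
  have h3r : (3 : ℝ) ≤ (n : ℝ) := by exact_mod_cast hn
  have hnr : ((n : ℝ) - 1) ≠ 0 := by intro h; linarith
  set S := sineMat (n - 2) with hS
  set p := pvec n with hp
  set Jp := (flipMat (n - 2)).mulVec (pvec n) with hJp
  have hT : Tmat n = blockT n p Jp S := rfl
  have hSS : ∀ v : Fin (n - 2) → ℝ, S.mulVec (S.mulVec v) = v := by
    intro v
    rw [Matrix.mulVec_mulVec, hS, sineMat_sq, Matrix.one_mulVec]
  set Tinv := blockT n (fun i => -(S.mulVec p) i) (fun i => -(S.mulVec Jp) i) S with hTinvdef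
  have hTinvT : Tinv * Tmat n = 1 := by
    rw [hTinvdef, hT, blockT_mul hn]
    have e1 : (fun i => -(S.mulVec p) i + S.mulVec p i) = (fun _ : Fin (n - 2) => (0 : ℝ)) :=
      funext fun i => by ring
    have e2 : (fun i => -(S.mulVec Jp) i + S.mulVec Jp i) = (fun _ : Fin (n - 2) => (0 : ℝ)) :=
      funext fun i => by ring
    rw [e1, e2, hS, sineMat_sq]
    exact blockT_id hn
  have hTTinv : Tmat n * Tinv = 1 := by
    rw [hTinvdef, hT, blockT_mul hn]
    have e1 : (fun i => p i + S.mulVec (fun i => -(S.mulVec p) i) i)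
        = (fun _ : Fin (n - 2) => (0 : ℝ)) := by
      funext i
      have : (fun i => -(S.mulVec p) i) = -(S.mulVec p) := rfl
      rw [this, Matrix.mulVec_neg, hSS]
      simp
    have e2 : (fun i => Jp i + S.mulVec (fun i => -(S.mulVec Jp) i) i)
        = (fun _ : Fin (n - 2) => (0 : ℝ)) := by
      funext i
      have : (fun i => -(S.mulVec Jp) i) = -(S.mulVec Jp) := rfl
      rw [this, Matrix.mulVec_neg, hSS]
      simp
    rw [e1, e2, hS, sineMat_sq]
    exact blockT_id hn
  have hinv : (Tmat n)⁻¹ = Tinv := Matrix.inv_eq_left_inv hTinvT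
  set d : Fin n → ℝ := fun j =>
    if (j : ℕ) = 0 ∨ (j : ℕ) = n - 1 then symb m hc 0
    else symb m hc (((j : ℕ) : ℝ) * Real.pi / ((n : ℝ) - 1)) with hd
  have hAT : A * Tmat n = Tmat n * Matrix.diagonal d := by
    ext i k
    rw [Matrix.mul_apply, Matrix.mul_diagonal]
    have hmv : ∑ j, A i j * Tmat n j k = A.mulVec (fun j => Tmat n j k) i := rfl
    rw [hmv, hA (fun j => Tmat n j k) i]
    rcases fin_cases3 hn k with hk | hk | ⟨t, hk⟩
    · subst hk
      have hdk : d ⟨0, by omega⟩ = symb m hc 0 := by rw [hd]; simp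
      rw [hdk]
      set f : ℤ → ℝ := fun s => 1 - (s : ℝ) / ((n : ℝ) - 1) with hf
      rw [col_sum n m hn hnm hc hsym 0 f _ ?hu ?hcos ?h0 ?h1 i, mul_comm]
      case hu =>
        intro r
        rcases fin_cases3 hn r with hr | hr | ⟨s, hr⟩ <;> subst hr
        · rw [hT, blockT_00 hn, hf]; simp
        · rw [hT, blockT_last0 hn, hf]
          simp only
          have : ((((⟨n - 1, by omega⟩ : Fin n) : ℕ) : ℤ) : ℝ) = (n : ℝ) - 1 := by
            simp; push_cast [Nat.cast_sub (by omega : 1 ≤ n)]; ring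
          rw [this]
          field_simp; norm_num
        · rw [hT, blockT_mid0 hn, hf, hp]
          simp only [pvec]
          have : ((((⟨(s : ℕ) + 1, by have := s.isLt; omega⟩ : Fin n) : ℕ) : ℤ) : ℝ)
              = ((s : ℕ) : ℝ) + 1 := by simp
          rw [this]
      case hcos =>
        intro s j
        rw [hf]
        simp only [mul_zero, Real.cos_zero]
        push_cast
        field_simp
        try ring
      case h0 =>
        intro j _ _
        rw [hf]
        push_cast
        field_simp
        try ring
      case h1 =>
        intro j _ _
        rw [hf]
        push_cast
        field_simp
        try ring
    · subst hk
      have hdk : d ⟨n - 1, by omega⟩ = symb m hc 0 := by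
        rw [hd]; simp
      rw [hdk]
      set f : ℤ → ℝ := fun s => (s : ℝ) / ((n : ℝ) - 1) with hf
      rw [col_sum n m hn hnm hc hsym 0 f _ ?hu ?hcos ?h0 ?h1 i, mul_comm]
      case hu =>
        intro r
        rcases fin_cases3 hn r with hr | hr | ⟨s, hr⟩ <;> subst hr
        · rw [hT, blockT_0last hn, hf]; simp
        · rw [hT, blockT_lastlast hn, hf]
          simp only
          have : ((((⟨n - 1, by omega⟩ : Fin n) : ℕ) : ℤ) : ℝ) = (n : ℝ) - 1 := by
            simp; push_cast [Nat.cast_sub (by omega : 1 ≤ n)]; ring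
          rw [this]
          field_simp
        · rw [hT, blockT_midlast hn, hJp, flip_mulVec, hf]
          simp only [pvec]
          have hs := s.isLt
          have e1 : ((n - 2 - 1 - (s : ℕ) : ℕ) : ℝ) = (n : ℝ) - 3 - ((s : ℕ) : ℝ) := by
            rw [show n - 2 - 1 - (s : ℕ) = n - 3 - (s : ℕ) by omega,
              Nat.cast_sub (by omega : (s : ℕ) ≤ n - 3),
              Nat.cast_sub (by omega : 3 ≤ n)]
            push_cast
            ring
          have e2 : ((((⟨(s : ℕ) + 1, by have := s.isLt; omega⟩ : Fin n) : ℕ) : ℤ) : ℝ)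
              = ((s : ℕ) : ℝ) + 1 := by simp
          rw [e1, e2]
          field_simp
          ring
      case hcos =>
        intro s j
        rw [hf]
        simp only [mul_zero, Real.cos_zero]
        push_cast
        field_simp
        try ring
      case h0 =>
        intro j _ _
        rw [hf]
        push_cast
        field_simp
        try ring
      case h1 =>
        intro j _ _
        rw [hf]
        push_cast
        field_simp
        try ring
    · subst hk
      have ht := t.isLt
      set θ : ℝ := (((t : ℕ) : ℝ) + 1) * Real.pi / ((n : ℝ) - 1) with hθ
      have hdk : d ⟨(t : ℕ) + 1, by omega⟩ = symb m hc θ := by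
        rw [hd]
        simp only
        rw [if_neg (by simp; omega)]
        congr 1
        rw [hθ]
        simp
      rw [hdk]
      set f : ℤ → ℝ := fun s => Real.sqrt (2 / ((n : ℝ) - 1)) * Real.sin ((s : ℝ) * θ) with hf
      have hnθ : ((n : ℝ) - 1) * θ = (((t : ℕ) + 1 : ℕ) : ℝ) * Real.pi := by
        rw [hθ]
        push_cast
        field_simp
      rw [col_sum n m hn hnm hc hsym θ f _ ?hu ?hcos ?h0 ?h1 i, mul_comm]
      case hu =>
        intro r
        rcases fin_cases3 hn r with hr | hr | ⟨s, hr⟩ <;> subst hr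
        · rw [hT, blockT_0mid hn, hf]; simp
        · rw [hT, blockT_lastmid hn, hf]
          simp only
          have e0 : ((((⟨n - 1, by omega⟩ : Fin n) : ℕ) : ℤ) : ℝ) = (n : ℝ) - 1 := by
            simp; push_cast [Nat.cast_sub (by omega : 1 ≤ n)]; ring
          rw [e0, hnθ, Real.sin_nat_mul_pi]
          ring
        · rw [hT, blockT_midmid hn, hS, hf]
          simp only [sineMat, Matrix.of_apply]
          rw [hcast]
          have e2 : ((((⟨(s : ℕ) + 1, by have := s.isLt; omega⟩ : Fin n) : ℕ) : ℤ) : ℝ)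
              = ((s : ℕ) : ℝ) + 1 := by simp
          rw [e2]
          congr 1
          rw [hθ]
          field_simp
      case hcos =>
        intro s j
        rw [hf]
        simp only
        have e1 : (((s - j : ℤ)) : ℝ) * θ = (s : ℝ) * θ - (j : ℝ) * θ := by push_cast; ring
        have e2 : (((s + j : ℤ)) : ℝ) * θ = (s : ℝ) * θ + (j : ℝ) * θ := by push_cast; ring
        rw [e1, e2, Real.sin_sub, Real.sin_add]
        ring
      case h0 =>
        intro j _ _
        rw [hf]
        simp only
        push_cast
        simp [neg_mul, Real.sin_neg]
        try ring
      case h1 =>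
        intro j _ _
        rw [hf]
        simp only
        have e1 : (((n : ℤ) - 1 + j : ℤ) : ℝ) * θ
            = (((t : ℕ) + 1 : ℕ) : ℝ) * Real.pi + (j : ℝ) * θ := by
          rw [← hnθ]; push_cast; ring
        have e2 : (((n : ℤ) - 1 - j : ℤ) : ℝ) * θ
            = (((t : ℕ) + 1 : ℕ) : ℝ) * Real.pi - (j : ℝ) * θ := by
          rw [← hnθ]; push_cast; ring
        have e3 : (((n : ℤ) - 1 : ℤ) : ℝ) * θ = (((t : ℕ) + 1 : ℕ) : ℝ) * Real.pi := by
          rw [← hnθ]; push_cast; ring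
        rw [e1, e2, e3, Real.sin_add, Real.sin_sub, Real.sin_nat_mul_pi]
        ring
  calc A = A * (Tmat n * Tinv) := by rw [hTTinv, Matrix.mul_one]
    _ = (A * Tmat n) * Tinv := by rw [Matrix.mul_assoc]
    _ = (Tmat n * Matrix.diagonal d) * Tinv := by rw [hAT]
    _ = Tmat n * Matrix.diagonal d * (Tmat n)⁻¹ := by rw [hinv]
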